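/- arXiv:2303.09961 — 3 statements merged into one kernel-verified Lean document; each statement's English description precedes it below -/
import Mathlib

section
/- Let (φ_t) be a non-elliptic semigroup in 𝔻 with Koenigs function h, and let Δ be a parabolic petal of (φ_t), i.e., h(Δ) is a maximal horizontal half-plane in Ω = h(𝔻). Then for every z ∈ Δ, lim_{t→−∞} d_𝔻(z, φ_t(z))/t = 0. -/
/-!
On a parabolic petal, `h` maps `Δ` onto a half-plane `H = h(Δ) ⊆ h(𝔻)` and
`φ_t z = h⁻¹(h z + t)` for `t ≤ 0`. Since `h` is injective, `h⁻¹ : H → 𝔻` is holomorphic, so by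
Schwarz–Pick `d_𝔻(z, φ_t z)` is at most the hyperbolic distance in `H` between `h z` and
`h z + t`. For a horizontal translation at height `β` above `∂H` this distance is
`arsinh (|t| / 2β) ≤ log (1 + |t| / β) = o(|t|)`.
-/

open Filter Set

/-- The inverse hyperbolic tangent. -/
noncomputable def arctanh (x : ℝ) : ℝ := (1 / 2) * Real.log ((1 + x) / (1 - x))

/-- The hyperbolic distance of the unit disc:
`d_𝔻(z, w) = arctanh |(z - w)/(1 - conj z · w)|`. -/
noncomputable def dD (z w : ℂ) : ℝ :=
  arctanh (‖(z - w) / (1 - (starRingEnd ℂ) z * w)‖)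

def unitDisc : Set ℂ := {z : ℂ | ‖z‖ < 1}

/-- A one-parameter semigroup of holomorphic self-maps of the unit disc
(which is not a group): `φ 0 = id`, the semigroup property holds for
nonnegative times, and `φ t → id` locally uniformly as `t → 0⁺`. -/
structure IsSemigroupD (φ : ℝ → ℂ → ℂ) : Prop where
  mapsTo : ∀ t : ℝ, 0 ≤ t → Set.MapsTo (φ t) unitDisc unitDisc
  holo : ∀ t : ℝ, 0 ≤ t → DifferentiableOn ℂ (φ t) unitDisc
  id0 : ∀ z ∈ unitDisc, φ 0 z = z
  comp : ∀ s t : ℝ, 0 ≤ s → 0 ≤ t → ∀ z ∈ unitDisc, φ (s + t) z = φ s (φ t z)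
  cont0 : TendstoLocallyUniformlyOn (fun t : ℝ => φ t) id (nhdsWithin 0 (Set.Ioi 0)) unitDisc
  notGroup : ∃ t : ℝ, 0 < t ∧ ¬ Set.BijOn (φ t) unitDisc unitDisc

/-- The backward invariant set `W = ⋂_{t ≥ 0} φ_t(𝔻)`. -/
def backwardInvSet (φ : ℝ → ℂ → ℂ) : Set ℂ :=
  ⋂ t ∈ Set.Ici (0 : ℝ), φ t '' unitDisc

/-- A petal: a nonempty connected component of the interior of the backward invariant set. -/
def IsPetal (φ : ℝ → ℂ → ℂ) (Δ : Set ℂ) : Prop :=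
  Δ.Nonempty ∧ ∃ z ∈ interior (backwardInvSet φ),
    Δ = connectedComponentIn (interior (backwardInvSet φ)) z

/-- `τ ∈ ∂𝔻` is the Denjoy–Wolff point of `φ` (non-elliptic case). -/
def IsDenjoyWolffBoundary (φ : ℝ → ℂ → ℂ) (τ : ℂ) : Prop :=
  ‖τ‖ = 1 ∧ ∀ z ∈ unitDisc, Filter.Tendsto (fun t => φ t z) Filter.atTop (nhds τ)

/-- The Koenigs function of a non-elliptic semigroup. -/
structure IsKoenigsNE (φ : ℝ → ℂ → ℂ) (h : ℂ → ℂ) : Prop where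
  holo : DifferentiableOn ℂ h unitDisc
  inj : Set.InjOn h unitDisc
  zero : h 0 = 0
  semiconj : ∀ t : ℝ, 0 ≤ t → ∀ z ∈ unitDisc, h (φ t z) = h z + (t : ℂ)

/-- A horizontal half-plane `{Im z > a}` or `{Im z < a}`. -/
def IsHorizHalfPlane (H : Set ℂ) : Prop :=
  ∃ a : ℝ, H = {z : ℂ | a < z.im} ∨ H = {z : ℂ | z.im < a}

/-- `Δ` is a parabolic petal: a petal whose image `h(Δ)` is a maximal horizontal
half-plane contained in `Ω = h(𝔻)`. -/
def IsParabolicPetal (φ : ℝ → ℂ → ℂ) (h : ℂ → ℂ) (Δ : Set ℂ) : Prop :=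
  IsPetal φ Δ ∧ IsHorizHalfPlane (h '' Δ) ∧ h '' Δ ⊆ h '' unitDisc ∧
  ∀ H : Set ℂ, IsHorizHalfPlane H → h '' Δ ⊂ H → ¬ H ⊆ h '' unitDisc

open Complex ComplexConjugate Topology

lemma isOpen_unitDisc : IsOpen unitDisc := isOpen_lt continuous_norm continuous_const

lemma one_sub_conj_mul_ne_zero {z w : ℂ} (hz : z ∈ unitDisc) (hw : w ∈ unitDisc) :
    1 - conj z * w ≠ 0 := by
  have : ‖conj z * w‖ < 1 := by
    rw [norm_mul, norm_conj]
    exact mul_lt_one_of_nonneg_of_lt_one_left (norm_nonneg z) hz hw.le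
  intro h
  rw [← sub_eq_zero.mp h, norm_one] at this
  exact lt_irrefl 1 this

lemma normSq_one_sub_conj_mul_sub_normSq_sub (z w : ℂ) :
    normSq (1 - conj z * w) - normSq (z - w) = (1 - normSq z) * (1 - normSq w) := by
  simp only [normSq_apply, sub_re, sub_im, one_re, one_im, mul_re, mul_im, conj_re, conj_im]
  ring

lemma norm_mobius_lt_one {z w : ℂ} (hz : z ∈ unitDisc) (hw : w ∈ unitDisc) :
    ‖(z - w) / (1 - conj z * w)‖ < 1 := by
  rw [norm_div, div_lt_one (norm_pos_iff.mpr (one_sub_conj_mul_ne_zero hz hw)),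
    ← sq_lt_sq₀ (norm_nonneg _) (norm_nonneg _), ← normSq_eq_norm_sq, ← normSq_eq_norm_sq]
  have hz' : normSq z < 1 := by
    rw [normSq_eq_norm_sq]; exact pow_lt_one₀ (norm_nonneg z) hz two_ne_zero
  have hw' : normSq w < 1 := by
    rw [normSq_eq_norm_sq]; exact pow_lt_one₀ (norm_nonneg w) hw two_ne_zero
  nlinarith [normSq_one_sub_conj_mul_sub_normSq_sub z w]

lemma arctanh_nonneg {x : ℝ} (h0 : 0 ≤ x) (h1 : x < 1) : 0 ≤ arctanh x := by
  unfold arctanh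
  have : 1 ≤ (1 + x) / (1 - x) := by rw [le_div_iff₀ (by linarith)]; linarith
  have := Real.log_nonneg this
  positivity

lemma arctanh_le_arctanh {x y : ℝ} (hx : 0 ≤ x) (hxy : x ≤ y) (hy : y < 1) :
    arctanh x ≤ arctanh y := by
  unfold arctanh
  have hxy' : (1 + x) / (1 - x) ≤ (1 + y) / (1 - y) := by
    rw [div_le_div_iff₀ (by linarith) (by linarith)]; nlinarith
  have := Real.log_le_log (div_pos (by linarith) (by linarith)) hxy'
  linarith

lemma dD_nonneg {z w : ℂ} (hz : z ∈ unitDisc) (hw : w ∈ unitDisc) : 0 ≤ dD z w :=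
  arctanh_nonneg (norm_nonneg _) (norm_mobius_lt_one hz hw)

lemma backwardInvSet_subset_unitDisc {φ : ℝ → ℂ → ℂ} (hφ : IsSemigroupD φ) :
    backwardInvSet φ ⊆ unitDisc := by
  intro x hx
  obtain ⟨y, hy, rfl⟩ := mem_iInter₂.mp hx 0 self_mem_Ici
  rwa [hφ.id0 y hy]

lemma IsPetal.subset_unitDisc {φ : ℝ → ℂ → ℂ} {Δ : Set ℂ} (hΔ : IsPetal φ Δ)
    (hφ : IsSemigroupD φ) : Δ ⊆ unitDisc := by
  obtain ⟨-, z, -, rfl⟩ := hΔ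
  exact (connectedComponentIn_subset _ _).trans
    (interior_subset.trans (backwardInvSet_subset_unitDisc hφ))

lemma AnalyticAt.two_le_analyticOrderAt_sub {𝕜 E : Type*} [NontriviallyNormedField 𝕜]
    [CharZero 𝕜] [NormedAddCommGroup E] [NormedSpace 𝕜 E] [CompleteSpace E] {f : 𝕜 → E} {u : 𝕜}
    (hf : AnalyticAt 𝕜 f u) (hderiv : deriv f u = 0) : 2 ≤ analyticOrderAt (f · - f u) u := by
  have h1 : 1 ≤ analyticOrderAt (deriv f) u := Order.one_le_iff_ne_zero.mpr <| by
    simpa [hf.deriv.analyticOrderAt_eq_zero] using hderiv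
  calc (2 : ℕ∞) = 1 + 1 := by norm_num
    _ ≤ analyticOrderAt (deriv f) u + 1 := by gcongr
    _ = _ := hf.analyticOrderAt_deriv_add_one

lemma exists_hasStrictDerivAt_pow_eq {G : ℂ → ℂ} {u : ℂ} (hG : AnalyticAt ℂ G u)
    (hGu : G u ≠ 0) {n : ℕ} (hn : n ≠ 0) :
    ∃ ρ : ℂ → ℂ, ∃ ρ' : ℂ, HasStrictDerivAt ρ ρ' u ∧ ρ u ≠ 0 ∧ ∀ᶠ w in 𝓝 u, ρ w ^ n = G w := by
  obtain ⟨r, hr⟩ := IsAlgClosed.exists_pow_nat_eq (G u) (Nat.pos_of_ne_zero hn)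
  have hr0 : r ≠ 0 := by rintro rfl; exact hGu (by rw [← hr, zero_pow hn])
  have hslit : G u / G u ∈ slitPlane := by rw [div_self hGu]; exact one_mem_slitPlane
  have hlog := (hasStrictDerivAt_log hslit).comp u (hG.hasStrictDerivAt.div_const (G u))
  refine ⟨fun w => r * exp (log (G w / G u) / n), _, ((hlog.div_const _).cexp.const_mul r),
    by simp [div_self hGu, hr0], ?_⟩
  filter_upwards [(hG.continuousAt.div_const _).eventually_mem (isOpen_slitPlane.mem_nhds hslit)]
    with w hw
  rw [mul_pow, ← exp_nat_mul, mul_div_cancel₀ _ (Nat.cast_ne_zero.2 hn),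
    exp_log (slitPlane_ne_zero hw), hr, mul_div_cancel₀ _ hGu]

lemma not_injOn_pow_of_mem_nhds_zero {n : ℕ} (hn : 2 ≤ n) {s : Set ℂ} (hs : s ∈ 𝓝 0) :
    ¬ InjOn (· ^ n) s := by
  intro hinj
  obtain ⟨ε, hε, hball⟩ := Metric.mem_nhds_iff.mp hs
  have hω := isPrimitiveRoot_exp n (by omega)
  set ω := exp (2 * Real.pi * I / n)
  set δ : ℂ := ((ε / 2 : ℝ) : ℂ)
  have hδ : ‖δ‖ < ε := by
    rw [norm_real, Real.norm_of_nonneg (by positivity)]; linarith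
  have hδ0 : δ ≠ 0 := ofReal_ne_zero.mpr (by positivity)
  have hδs : δ ∈ s := hball (by simpa using hδ)
  have hδωs : δ * ω ∈ s := hball (by simpa [hω.norm'_eq_one (by omega)] using hδ)
  have heq : δ = δ * ω := hinj hδs hδωs (by simp [mul_pow, hω.pow_eq_one])
  exact hω.ne_one (by omega) (mul_left_cancel₀ hδ0 (heq.symm.trans (mul_one δ).symm))

theorem deriv_ne_zero_of_injOn {f : ℂ → ℂ} {s : Set ℂ} (hs : IsOpen s)
    (hf : DifferentiableOn ℂ f s) (hinj : InjOn f s) {u : ℂ} (hu : u ∈ s) :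
    deriv f u ≠ 0 := by
  intro hderiv
  have hfa : AnalyticAt ℂ f u := hf.analyticAt (hs.mem_nhds hu)
  have hord := hfa.two_le_analyticOrderAt_sub hderiv
  cases hn : analyticOrderAt (f · - f u) u with
  | top =>
    have hconst : ∀ᶠ w in 𝓝[≠] u, (w ∈ s ∧ f w - f u = 0) ∧ w ≠ u :=
      (((hs.eventually_mem hu).and (analyticOrderAt_eq_top.mp hn)).filter_mono
        nhdsWithin_le_nhds).and self_mem_nhdsWithin
    obtain ⟨w, ⟨hws, hfw⟩, hwu⟩ := hconst.exists
    exact hwu (hinj hws hu (sub_eq_zero.mp hfw))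
  | coe n =>
    -- Near `u`, `f - f u = ψ ^ n` with `ψ` a local homeomorphism onto a neighbourhood of `0`,
    -- and `(· ^ n)` is not injective there.
    have hn2 : 2 ≤ n := by rw [hn] at hord; exact_mod_cast hord
    obtain ⟨G, hGa, hGu, hfG⟩ := (hfa.fun_sub analyticAt_const).analyticOrderAt_eq_natCast.mp hn
    obtain ⟨ρ, ρ', hρ, hρu, hρG⟩ := exists_hasStrictDerivAt_pow_eq hGa hGu (by omega : n ≠ 0)
    set ψ : ℂ → ℂ := fun w => (w - u) * ρ w
    have hψ : HasStrictDerivAt ψ (ρ u) u := by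
      simpa using ((hasStrictDerivAt_id u).fun_sub (hasStrictDerivAt_const u u)).fun_mul hρ
    have hψu : ψ u = 0 := by simp [ψ]
    have hV : {w | w ∈ s ∧ f w - f u = ψ w ^ n} ∈ 𝓝 u := by
      filter_upwards [hs.mem_nhds hu, hfG, hρG] with w hws hw hρw
      exact ⟨hws, by rw [hw, smul_eq_mul, ← hρw, mul_pow]⟩
    have himage : ψ '' {w | w ∈ s ∧ f w - f u = ψ w ^ n} ∈ 𝓝 0 := by
      rw [← hψu, ← hψ.map_nhds_eq hρu]; exact image_mem_map hV
    refine not_injOn_pow_of_mem_nhds_zero hn2 himage ?_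
    rintro _ ⟨w₁, ⟨hw₁s, hw₁⟩, rfl⟩ _ ⟨w₂, ⟨hw₂s, hw₂⟩, rfl⟩ hψw
    have : f w₁ = f w₂ := by linear_combination hw₁ - hw₂ + hψw
    rw [hinj hw₁s hw₂s this]

theorem hasStrictDerivAt_invFunOn {f : ℂ → ℂ} {s : Set ℂ} (hs : IsOpen s)
    (hf : DifferentiableOn ℂ f s) (hinj : InjOn f s) {u : ℂ} (hu : u ∈ s) :
    HasStrictDerivAt (Function.invFunOn f s) (deriv f u)⁻¹ (f u) := by
  have hfu : HasStrictDerivAt f (deriv f u) u :=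
    (hf.analyticAt (hs.mem_nhds hu)).hasStrictDerivAt
  refine hfu.to_local_left_inverse (deriv_ne_zero_of_injOn hs hf hinj hu) ?_
  filter_upwards [hs.mem_nhds hu] with x hx using hinj.leftInvOn_invFunOn hx

theorem differentiableOn_invFunOn {f : ℂ → ℂ} {s : Set ℂ} (hs : IsOpen s)
    (hf : DifferentiableOn ℂ f s) (hinj : InjOn f s) :
    DifferentiableOn ℂ (Function.invFunOn f s) (f '' s) := by
  rintro _ ⟨u, hu, rfl⟩
  exact (hasStrictDerivAt_invFunOn hs hf hinj hu).hasDerivAt.differentiableAt.differentiableWithinAt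

def horizReflect (a : ℝ) (w : ℂ) : ℂ := conj w + 2 * a * I

/-- Maps the unit disc onto the half-plane bounded by `Im w = a` that contains `w₀`. -/
noncomputable def halfPlaneCayley (a : ℝ) (w₀ ξ : ℂ) : ℂ :=
  (w₀ - ξ * horizReflect a w₀) / (1 - ξ)

lemma sub_horizReflect_self (a : ℝ) (w : ℂ) : w - horizReflect a w = 2 * (w.im - a) * I := by
  apply Complex.ext <;> simp [horizReflect]; ring

lemma normSq_sub_horizReflect_sub_normSq_sub (a : ℝ) (w w₀ : ℂ) :
    normSq (w - horizReflect a w₀) - normSq (w - w₀) = 4 * (w.im - a) * (w₀.im - a) := by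
  simp only [horizReflect, normSq_apply, sub_re, sub_im, add_re, add_im, mul_re, mul_im, conj_re,
    conj_im, ofReal_re, ofReal_im, I_re, I_im, re_ofNat, im_ofNat]
  ring

lemma im_halfPlaneCayley_sub (a : ℝ) (w₀ : ℂ) {ξ : ℂ} (hξ : ξ ≠ 1) :
    (halfPlaneCayley a w₀ ξ).im - a = (w₀.im - a) * (1 - normSq ξ) / normSq (1 - ξ) := by
  have : normSq (1 - ξ) ≠ 0 := by
    rw [ne_eq, normSq_eq_zero, sub_eq_zero]; exact hξ.symm
  rw [halfPlaneCayley, horizReflect, div_im]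
  field_simp
  simp only [sub_re, sub_im, add_re, add_im, mul_re, mul_im, one_re, one_im, I_re, I_im, conj_re,
    conj_im, ofReal_re, ofReal_im, normSq_apply, re_ofNat, im_ofNat]
  ring

lemma halfPlaneCayley_mem {a : ℝ} {w₀ ξ : ℂ} (hw₀ : w₀.im ≠ a) (hξ : ξ ∈ Metric.ball 0 1) :
    0 < ((halfPlaneCayley a w₀ ξ).im - a) * (w₀.im - a) := by
  rw [mem_ball_zero_iff] at hξ
  have hξ1 : ξ ≠ 1 := by rintro rfl; simp at hξ
  have hξ2 : normSq ξ < 1 := by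
    rw [normSq_eq_norm_sq]; exact pow_lt_one₀ (norm_nonneg ξ) hξ two_ne_zero
  rw [im_halfPlaneCayley_sub a w₀ hξ1, div_mul_eq_mul_div, mul_right_comm]
  have : 0 < normSq (1 - ξ) := normSq_pos.mpr (sub_ne_zero.mpr hξ1.symm)
  have : 0 < (w₀.im - a) * (w₀.im - a) := mul_self_pos.mpr (sub_ne_zero.mpr hw₀)
  exact div_pos (mul_pos ‹_› (by linarith)) ‹_›

lemma halfPlaneCayley_zero (a : ℝ) (w₀ : ℂ) : halfPlaneCayley a w₀ 0 = w₀ := by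
  simp [halfPlaneCayley]

lemma halfPlaneCayley_div {a : ℝ} {w₀ w : ℂ} (hw₀ : w₀.im ≠ a)
    (hw : w - horizReflect a w₀ ≠ 0) :
    halfPlaneCayley a w₀ ((w - w₀) / (w - horizReflect a w₀)) = w := by
  have : 1 - (w - w₀) / (w - horizReflect a w₀) ≠ 0 := by
    rw [one_sub_div hw, sub_sub_sub_cancel_left, sub_horizReflect_self]
    have : ((w₀.im - a : ℝ) : ℂ) ≠ 0 := ofReal_ne_zero.mpr (sub_ne_zero.mpr hw₀)
    exact div_ne_zero (mul_ne_zero (mul_ne_zero two_ne_zero (by exact_mod_cast this)) I_ne_zero) hw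
  rw [halfPlaneCayley, div_eq_iff this]
  field_simp
  ring

lemma differentiableOn_halfPlaneCayley (a : ℝ) (w₀ : ℂ) :
    DifferentiableOn ℂ (halfPlaneCayley a w₀) (Metric.ball 0 1) := by
  intro ξ hξ
  have hξ1 : 1 - ξ ≠ 0 := by
    rw [sub_ne_zero]; rintro rfl; simp at hξ
  unfold halfPlaneCayley
  fun_prop (disch := exact hξ1)

lemma eq_setOf_mul_pos_of_mem {H : Set ℂ} {a : ℝ}
    (hH : H = {w | a < w.im} ∨ H = {w | w.im < a}) {w₀ : ℂ} (hw₀ : w₀ ∈ H) :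
    H = {w | 0 < (w.im - a) * (w₀.im - a)} := by
  rcases hH with rfl | rfl <;> ext w <;> simp only [mem_ofPred_eq] at hw₀ ⊢ <;>
    constructor <;> intro hw <;> nlinarith

/-- Schwarz–Pick for holomorphic maps from a horizontal half-plane into the disc: the
pseudo-hyperbolic distance of the half-plane is `‖(w - w₀) / (w - w₀*)‖`, with `w₀*` the
reflection of `w₀` in the boundary line. -/
theorem dD_le_of_mapsTo_halfPlane {g : ℂ → ℂ} {a : ℝ} {w₀ w : ℂ} (hw₀ : w₀.im ≠ a)
    (hg : DifferentiableOn ℂ g {v | 0 < (v.im - a) * (w₀.im - a)})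
    (hgD : MapsTo g {v | 0 < (v.im - a) * (w₀.im - a)} unitDisc)
    (hw : 0 < (w.im - a) * (w₀.im - a)) :
    dD (g w₀) (g w) ≤ arctanh ‖(w - w₀) / (w - horizReflect a w₀)‖ := by
  set z := g w₀
  have hzD : z ∈ unitDisc := hgD (mul_self_pos.mpr (sub_ne_zero.mpr hw₀))
  have hC : MapsTo (halfPlaneCayley a w₀) (Metric.ball 0 1)
      {v | 0 < (v.im - a) * (w₀.im - a)} := fun ξ hξ => halfPlaneCayley_mem hw₀ hξ
  set ψ : ℂ → ℂ := fun ξ =>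
    (z - g (halfPlaneCayley a w₀ ξ)) / (1 - conj z * g (halfPlaneCayley a w₀ ξ))
  have hψ : DifferentiableOn ℂ ψ (Metric.ball 0 1) := by
    have hgC := hg.comp (differentiableOn_halfPlaneCayley a w₀) hC
    exact ((differentiableOn_const z).sub hgC).div
      ((differentiableOn_const 1).sub ((differentiableOn_const _).mul hgC))
      fun ξ hξ => one_sub_conj_mul_ne_zero hzD (hgD (hC hξ))
  have hψD : MapsTo ψ (Metric.ball 0 1) (Metric.closedBall 0 1) := fun ξ hξ =>
    mem_closedBall_zero_iff.mpr (norm_mobius_lt_one hzD (hgD (hC hξ))).le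
  have hψ0 : ψ 0 = 0 := by simp [ψ, halfPlaneCayley_zero, z]
  have hnormSq : normSq (w - w₀) < normSq (w - horizReflect a w₀) := by
    linarith [normSq_sub_horizReflect_sub_normSq_sub a w w₀]
  have hne : w - horizReflect a w₀ ≠ 0 := normSq_pos.mp ((normSq_nonneg _).trans_lt hnormSq)
  set ξ := (w - w₀) / (w - horizReflect a w₀)
  have hξ : ‖ξ‖ < 1 := by
    rwa [norm_div, div_lt_one (norm_pos_iff.mpr hne), ← sq_lt_sq₀ (norm_nonneg _) (norm_nonneg _),
      ← normSq_eq_norm_sq, ← normSq_eq_norm_sq]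
  have hCξ : halfPlaneCayley a w₀ ξ = w := halfPlaneCayley_div hw₀ hne
  calc dD z (g w) = arctanh ‖ψ ξ‖ := by simp only [dD, ψ, hCξ]
    _ ≤ arctanh ‖ξ‖ :=
      arctanh_le_arctanh (norm_nonneg _) (norm_le_norm_of_mapsTo_ball hψ hψD hψ0 hξ) hξ

lemma arctanh_norm_ofReal_div_le (t c : ℝ) (hc : c ≠ 0) :
    arctanh ‖(t : ℂ) / (t + c * I)‖ ≤ Real.log (1 + 2 / |c| * |t|) := by
  have hC : 0 < |c| := abs_pos.mpr hc
  have hT : 0 ≤ |t| := abs_nonneg t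
  set T := |t|
  set C := |c|
  set s := √(t ^ 2 + c ^ 2)
  have hs2 : s ^ 2 = T ^ 2 + C ^ 2 := by rw [Real.sq_sqrt (by positivity), sq_abs, sq_abs]
  have hs : 0 ≤ s := Real.sqrt_nonneg _
  have hTs : T < s := by nlinarith
  have hsTC : s ≤ T + C := by nlinarith
  have hnorm : ‖(t : ℂ) / (t + c * I)‖ = T / s := by
    rw [norm_div, norm_real, norm_add_mul_I, Real.norm_eq_abs]
  have hratio : (1 + T / s) / (1 - T / s) = (s + T) / (s - T) := by
    have : s ≠ 0 := by linarith
    field_simp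
  have hkey : (s + T) / (s - T) ≤ (1 + 2 / C * T) ^ 2 := by
    have hCT : 1 + 2 / C * T = (C + 2 * T) / C := by field_simp
    rw [hCT, div_pow, div_le_div_iff₀ (by linarith) (by positivity)]
    -- `C ^ 2 = (s - T) * (s + T)`
    nlinarith [mul_nonneg (sub_nonneg.mpr hTs.le)
      (sub_nonneg.mpr (pow_le_pow_left₀ (by linarith) (by linarith : s + T ≤ C + 2 * T) 2))]
  have hlog := Real.log_le_log (div_pos (by linarith) (by linarith)) hkey
  rw [Real.log_pow] at hlog
  unfold arctanh
  rw [hnorm, hratio]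
  push_cast at hlog
  linarith

lemma tendsto_log_one_add_mul_abs_div_atBot {k : ℝ} (hk : 0 < k) :
    Tendsto (fun t => Real.log (1 + k * |t|) / t) atBot (𝓝 0) := by
  have hx : Tendsto (fun t : ℝ => 1 + k * |t|) atBot atTop :=
    tendsto_atTop_add_const_left _ 1 (tendsto_abs_atBot_atTop.const_mul_atTop hk)
  refine ((Real.tendsto_pow_log_div_mul_add_atTop (-k⁻¹) k⁻¹ 1 (by simp [hk.ne'])).comp
    hx).congr' ?_
  filter_upwards [eventually_lt_atBot 0] with t ht
  simp only [Function.comp_apply, pow_one]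
  congr 1
  rw [abs_of_neg ht]
  field_simp
  ring

lemma tendsto_div_atBot_of_le_log_one_add {f : ℝ → ℝ} {k : ℝ} (hk : 0 < k)
    (hf : ∀ t < 0, 0 ≤ f t ∧ f t ≤ Real.log (1 + k * |t|)) :
    Tendsto (fun t => f t / t) atBot (𝓝 0) := by
  refine tendsto_of_tendsto_of_tendsto_of_le_of_le' (tendsto_log_one_add_mul_abs_div_atBot hk)
    tendsto_const_nhds ?_ ?_ <;> filter_upwards [eventually_lt_atBot 0] with t ht
  · exact div_le_div_of_nonpos_of_le ht.le (hf t ht).2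
  · exact div_nonpos_of_nonneg_of_nonpos (hf t ht).1 ht.le

theorem stmt6_general (φ : ℝ → ℂ → ℂ) (hφ : IsSemigroupD φ) (h : ℂ → ℂ) (hh : IsKoenigsNE φ h)
    (Δ : Set ℂ) (hpar : IsParabolicPetal φ h Δ)
    (hΔback : ∀ t : ℝ, t ≤ 0 → ∀ z ∈ Δ, φ t z ∈ Δ ∧ h (φ t z) = h z + (t : ℂ))
    (z : ℂ) (hz : z ∈ Δ) :
    Filter.Tendsto (fun t => dD z (φ t z) / t) Filter.atBot (nhds 0) := by
  obtain ⟨hpetal, ⟨a, hH⟩, hsub, -⟩ := hpar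
  have hΔD : Δ ⊆ unitDisc := hpetal.subset_unitDisc hφ
  have hHeq := eq_setOf_mul_pos_of_mem hH (mem_image_of_mem h hz)
  have hza : (h z).im ≠ a := fun heq => by
    simpa [heq] using hHeq.subset (mem_image_of_mem h hz)
  set F := Function.invFunOn h unitDisc
  have hFh : ∀ x ∈ unitDisc, F (h x) = x := fun x hx => hh.inj.leftInvOn_invFunOn hx
  have hF : DifferentiableOn ℂ F (h '' Δ) :=
    (differentiableOn_invFunOn isOpen_unitDisc hh.holo hh.inj).mono hsub
  have hFD : MapsTo F (h '' Δ) unitDisc := fun w hw => Function.invFunOn_mem (hsub hw)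
  rw [hHeq] at hF hFD
  have hc : 2 * ((h z).im - a) ≠ 0 := mul_ne_zero two_ne_zero (sub_ne_zero.mpr hza)
  refine tendsto_div_atBot_of_le_log_one_add (div_pos two_pos (abs_pos.mpr hc)) fun t ht => ?_
  obtain ⟨hφΔ, hφh⟩ := hΔback t ht.le z hz
  refine ⟨dD_nonneg (hΔD hz) (hΔD hφΔ), ?_⟩
  calc dD z (φ t z) = dD (F (h z)) (F (h z + t)) := by
        rw [← hφh, hFh _ (hΔD hz), hFh _ (hΔD hφΔ)]
    _ ≤ arctanh ‖(h z + t - h z) / (h z + t - horizReflect a (h z))‖ := by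
        refine dD_le_of_mapsTo_halfPlane hza hF hFD ?_
        simpa using mul_self_pos.mpr (sub_ne_zero.mpr hza)
    _ = arctanh ‖(t : ℂ) / (t + (2 * ((h z).im - a) : ℝ) * I)‖ := by
        rw [add_sub_cancel_left, add_sub_right_comm, sub_horizReflect_self]
        push_cast
        ring_nf
    _ ≤ _ := arctanh_norm_ofReal_div_le t _ hc

/-- Corollary 4.4: for a parabolic petal, `lim_{t → -∞} d_𝔻(z, φ_t(z))/t = 0`. -/
theorem stmt6 (φ : ℝ → ℂ → ℂ) (hφ : IsSemigroupD φ) (τ : ℂ)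
    (hτ : IsDenjoyWolffBoundary φ τ) (h : ℂ → ℂ) (hh : IsKoenigsNE φ h)
    (Δ : Set ℂ) (hpar : IsParabolicPetal φ h Δ)
    (hΔbij : ∀ t : ℝ, 0 ≤ t → Set.BijOn (φ t) Δ Δ)
    (hΔback : ∀ t : ℝ, t ≤ 0 → ∀ z ∈ Δ, φ t z ∈ Δ ∧ h (φ t z) = h z + (t : ℂ))
    (z : ℂ) (hz : z ∈ Δ) :
    Filter.Tendsto (fun t => dD z (φ t z) / t) Filter.atBot (nhds 0) :=
  stmt6_general φ hφ h hh Δ hpar hΔback z hz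
end

section
/- There exist a semigroup (φ_t) in 𝔻 and a non-regular backward orbit γ : [0, ∞) → 𝔻 of (φ_t) such that lim_{s → +∞} d_𝔻(γ(0), γ(s))/s² = 0. -/
open Filter Set

/-!
The map `h z = z / (1 - z)` sends `𝔻` onto the half-plane `Re w > -1/2`, and
`dilationMap a = h⁻¹ ∘ (a • ·) ∘ h`; for `a = e^{-t}` these maps form a semigroup with
attracting fixed point `0`. The points `imagAxisPoint y = h⁻¹ (i y)` lie on the preimage of the
imaginary axis, and `γ t = imagAxisPoint (e^t / 2)` is a backward orbit escaping to `1`.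
The hyperbolic distance of `imagAxisPoint y₁` and `imagAxisPoint y₂` is `arsinh |y₁ - y₂|`,
so `d(γ t, γ (t + 1)) = arsinh ((e - 1) e^t / 2) → ∞`, while
`d(γ 0, γ s) = arsinh ((e^s - 1) / 2) ≤ s`.
-/

namespace HalfPlaneDilation

open Complex (I)
open Real (exp arsinh)

noncomputable def dilationMap (a : ℝ) (z : ℂ) : ℂ :=
  a * z / (1 - (1 - a) * z)

variable {a b : ℝ} {z : ℂ}

lemma norm_one_sub_ofReal (ha : a ≤ 1) : ‖1 - (a : ℂ)‖ = 1 - a := by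
  rw [← Complex.ofReal_one, ← Complex.ofReal_sub, Complex.norm_real,
    Real.norm_of_nonneg (by linarith)]

lemma le_norm_dilationMap_denom (ha : a ≤ 1) :
    1 - (1 - a) * ‖z‖ ≤ ‖1 - (1 - (a : ℂ)) * z‖ := by
  simpa [norm_mul, norm_one_sub_ofReal ha] using norm_sub_norm_le 1 ((1 - (a : ℂ)) * z)

lemma norm_dilationMap_denom_pos (ha₀ : 0 ≤ a) (ha₁ : a ≤ 1) (hz : ‖z‖ < 1) :
    0 < ‖1 - (1 - (a : ℂ)) * z‖ := by
  have : (1 - a) * ‖z‖ < 1 := by nlinarith [norm_nonneg z]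
  linarith [le_norm_dilationMap_denom (z := z) ha₁]

lemma dilationMap_denom_ne_zero (ha₀ : 0 ≤ a) (ha₁ : a ≤ 1) (hz : ‖z‖ < 1) :
    1 - (1 - (a : ℂ)) * z ≠ 0 :=
  norm_pos_iff.mp (norm_dilationMap_denom_pos ha₀ ha₁ hz)

lemma norm_dilationMap_lt_one (ha₀ : 0 ≤ a) (ha₁ : a ≤ 1) (hz : ‖z‖ < 1) :
    ‖dilationMap a z‖ < 1 := by
  rw [dilationMap, norm_div, div_lt_one (norm_dilationMap_denom_pos ha₀ ha₁ hz), norm_mul,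
    Complex.norm_real, Real.norm_of_nonneg ha₀]
  nlinarith [le_norm_dilationMap_denom (z := z) ha₁]

@[simp]
lemma dilationMap_one (z : ℂ) : dilationMap 1 z = z := by
  simp [dilationMap]

lemma dilationMap_mul (hb₀ : 0 ≤ b) (hb₁ : b ≤ 1) (hz : ‖z‖ < 1) :
    dilationMap (a * b) z = dilationMap a (dilationMap b z) := by
  have hb := dilationMap_denom_ne_zero hb₀ hb₁ hz
  have hdenom : 1 - (1 - (a : ℂ)) * dilationMap b z
      = (1 - (1 - ((a * b : ℝ) : ℂ)) * z) / (1 - (1 - (b : ℂ)) * z) := by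
    rw [eq_div_iff hb, sub_mul, dilationMap, mul_assoc, div_mul_cancel₀ _ hb]
    push_cast
    ring
  rw [dilationMap.eq_1 a, hdenom, dilationMap.eq_1 b, mul_div_assoc',
    div_div_div_cancel_right₀ hb, dilationMap]
  push_cast
  ring

lemma differentiableOn_dilationMap (ha₀ : 0 ≤ a) (ha₁ : a ≤ 1) :
    DifferentiableOn ℂ (dilationMap a) unitDisc :=
  .div (by fun_prop) (by fun_prop) fun _ hz ↦ dilationMap_denom_ne_zero ha₀ ha₁ hz

lemma dilationMap_ne_neg (ha₀ : 0 < a) (ha₁ : a ≤ 1) (hz : ‖z‖ < 1) :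
    dilationMap a z ≠ -a := by
  intro h
  rw [dilationMap, div_eq_iff (dilationMap_denom_ne_zero ha₀.le ha₁ hz)] at h
  have : (a : ℂ) * z = -1 := by
    have h' : (a : ℂ) * (a * z + 1) = 0 := by linear_combination h
    simpa [ha₀.ne', add_eq_zero_iff_eq_neg] using h'
  have := congrArg norm this
  rw [norm_mul, Complex.norm_real, Real.norm_of_nonneg ha₀.le, norm_neg, norm_one] at this
  nlinarith [norm_nonneg z]

lemma not_surjOn_dilationMap (ha₀ : 0 < a) (ha₁ : a < 1) :
    ¬ SurjOn (dilationMap a) unitDisc unitDisc := by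
  intro h
  have hmem : -(a : ℂ) ∈ unitDisc := by
    simpa [unitDisc, abs_of_pos ha₀] using ha₁
  obtain ⟨z, hz, hza⟩ := h hmem
  exact dilationMap_ne_neg ha₀ ha₁.le hz hza

lemma dist_dilationMap_le (ha₀ : 0 ≤ a) (ha₁ : a ≤ 1) (hz : ‖z‖ < 1) :
    dist z (dilationMap a z) ≤ 2 * (1 - a) / (1 - ‖z‖) := by
  have hD := dilationMap_denom_ne_zero ha₀ ha₁ hz
  have hsub : z - dilationMap a z = (1 - a) * z * (1 - z) / (1 - (1 - a) * z) := by
    rw [dilationMap, eq_div_iff hD, sub_mul, div_mul_cancel₀ _ hD]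
    ring
  have hnum : ‖(1 - (a : ℂ)) * z * (1 - z)‖ ≤ 2 * (1 - a) := by
    rw [norm_mul, norm_mul, norm_one_sub_ofReal ha₁]
    have h1z : ‖1 - z‖ ≤ 2 := (norm_sub_le _ _).trans (by rw [norm_one]; linarith)
    have : ‖z‖ * ‖1 - z‖ ≤ 2 := by nlinarith [norm_nonneg z, norm_nonneg (1 - z)]
    nlinarith
  have hden : 1 - ‖z‖ ≤ ‖1 - (1 - (a : ℂ)) * z‖ := by
    nlinarith [le_norm_dilationMap_denom (z := z) ha₁, norm_nonneg z]
  rw [dist_eq_norm, hsub, norm_div]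
  exact div_le_div₀ (by linarith) hnum (by linarith) hden

lemma tendstoLocallyUniformlyOn_dilationMap {ι : Type*} {p : Filter ι} {a : ι → ℝ}
    (hlim : Tendsto a p (nhds 1)) (hmem : ∀ᶠ i in p, a i ∈ Icc 0 1) :
    TendstoLocallyUniformlyOn (fun i ↦ dilationMap (a i)) id p unitDisc := by
  refine tendstoLocallyUniformlyOn_of_forall_exists_nhds fun x (hx : ‖x‖ < 1) ↦ ?_
  obtain ⟨r, hxr, hr⟩ := exists_between hx
  refine ⟨Metric.ball 0 r, mem_nhdsWithin_of_mem_nhds (Metric.isOpen_ball.mem_nhds ?_), ?_⟩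
  · simpa using hxr
  rw [Metric.tendstoUniformlyOn_iff]
  intro ε hε
  have hbound : Tendsto (fun i ↦ 2 * (1 - a i) / (1 - r)) p (nhds 0) := by
    simpa using ((hlim.const_sub 1).const_mul 2).div_const (1 - r)
  filter_upwards [hmem, hbound.eventually_lt_const hε] with i ⟨hi₀, hi₁⟩ hi y hy
  rw [mem_ball_zero_iff] at hy
  calc dist (id y) (dilationMap (a i) y) ≤ 2 * (1 - a i) / (1 - ‖y‖) :=
        dist_dilationMap_le hi₀ hi₁ (hy.trans hr)
    _ ≤ 2 * (1 - a i) / (1 - r) := by gcongr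
    _ < ε := hi

noncomputable def imagAxisPoint (y : ℝ) : ℂ :=
  y * I / (1 + y * I)

lemma norm_one_add_mul_I (y : ℝ) : ‖1 + y * I‖ = √(1 + y ^ 2) := by
  simpa using Complex.norm_add_mul_I 1 y

lemma one_add_mul_I_ne_zero (y : ℝ) : 1 + y * I ≠ 0 := by
  rw [← norm_pos_iff, norm_one_add_mul_I]
  positivity

lemma norm_imagAxisPoint_lt_one (y : ℝ) : ‖imagAxisPoint y‖ < 1 := by
  rw [imagAxisPoint, norm_div, norm_one_add_mul_I, div_lt_one (by positivity), norm_mul,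
    Complex.norm_I, mul_one, Complex.norm_real, Real.norm_eq_abs, ← Real.sqrt_sq_eq_abs]
  exact Real.sqrt_lt_sqrt (sq_nonneg y) (by linarith)

lemma continuous_imagAxisPoint : Continuous imagAxisPoint :=
  Continuous.div (by fun_prop) (by fun_prop) one_add_mul_I_ne_zero

lemma dilationMap_imagAxisPoint (a y : ℝ) :
    dilationMap a (imagAxisPoint y) = imagAxisPoint (a * y) := by
  have hy := one_add_mul_I_ne_zero y
  have hdenom : 1 - (1 - (a : ℂ)) * imagAxisPoint y = (1 + (a * y : ℝ) * I) / (1 + y * I) := by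
    rw [eq_div_iff hy, sub_mul, imagAxisPoint, mul_assoc, div_mul_cancel₀ _ hy]
    push_cast
    ring
  rw [dilationMap, hdenom, imagAxisPoint, mul_div_assoc', div_div_div_cancel_right₀ hy,
    imagAxisPoint]
  push_cast
  ring

lemma conj_imagAxisPoint (y : ℝ) : starRingEnd ℂ (imagAxisPoint y) = imagAxisPoint (-y) := by
  simp [imagAxisPoint]

lemma imagAxisPoint_sub (u v : ℝ) :
    imagAxisPoint u - imagAxisPoint v = (u - v : ℝ) * I / ((1 + u * I) * (1 + v * I)) := by
  rw [imagAxisPoint, imagAxisPoint, div_sub_div _ _ (one_add_mul_I_ne_zero u)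
    (one_add_mul_I_ne_zero v)]
  push_cast
  ring

lemma one_sub_imagAxisPoint_mul (u v : ℝ) :
    1 - imagAxisPoint u * imagAxisPoint v
      = (1 + (u + v : ℝ) * I) / ((1 + u * I) * (1 + v * I)) := by
  rw [imagAxisPoint, imagAxisPoint, div_mul_div_comm,
    one_sub_div (mul_ne_zero (one_add_mul_I_ne_zero u) (one_add_mul_I_ne_zero v))]
  push_cast
  ring

lemma arctanh_div_sqrt_one_add_sq (x : ℝ) : arctanh (x / √(1 + x ^ 2)) = arsinh x := by
  have hS : √(1 + x ^ 2) ^ 2 = 1 + x ^ 2 := Real.sq_sqrt (by positivity)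
  have hxS : |x| < √(1 + x ^ 2) := by
    rw [← Real.sqrt_sq_eq_abs]
    exact Real.sqrt_lt_sqrt (sq_nonneg x) (by linarith)
  have hneg : 0 < √(1 + x ^ 2) - x := by linarith [le_abs_self x]
  have hratio : (1 + x / √(1 + x ^ 2)) / (1 - x / √(1 + x ^ 2)) = (x + √(1 + x ^ 2)) ^ 2 := by
    field_simp
    linear_combination (-(x + √(1 + x ^ 2))) * hS
  rw [arctanh, hratio, Real.log_pow, Real.arsinh]
  push_cast
  ring

lemma dD_imagAxisPoint (y₁ y₂ : ℝ) :
    dD (imagAxisPoint y₁) (imagAxisPoint y₂) = arsinh |y₁ - y₂| := by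
  rw [dD, conj_imagAxisPoint, imagAxisPoint_sub, one_sub_imagAxisPoint_mul, norm_div, norm_div,
    norm_div, norm_mul, norm_mul, norm_mul, Complex.norm_I, Complex.norm_real, norm_one_add_mul_I,
    norm_one_add_mul_I, norm_one_add_mul_I, norm_one_add_mul_I, Real.norm_eq_abs, neg_sq,
    ← arctanh_div_sqrt_one_add_sq, sq_abs]
  congr 1
  field_simp
  ring_nf

lemma exp_neg_mem_Icc {t : ℝ} (ht : 0 ≤ t) : exp (-t) ∈ Icc 0 1 :=
  ⟨(Real.exp_pos _).le, Real.exp_le_one_iff.mpr (by linarith)⟩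

lemma isSemigroupD_dilationMap_exp_neg : IsSemigroupD fun t ↦ dilationMap (exp (-t)) where
  mapsTo _t ht _z hz := norm_dilationMap_lt_one (exp_neg_mem_Icc ht).1 (exp_neg_mem_Icc ht).2 hz
  holo _t ht := differentiableOn_dilationMap (exp_neg_mem_Icc ht).1 (exp_neg_mem_Icc ht).2
  id0 z _ := by simp
  comp s t _ ht z hz := by
    rw [neg_add, Real.exp_add]
    exact dilationMap_mul (exp_neg_mem_Icc ht).1 (exp_neg_mem_Icc ht).2 hz
  cont0 := by
    refine tendstoLocallyUniformlyOn_dilationMap ?_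
      (eventually_mem_nhdsWithin.mono fun t ht ↦ exp_neg_mem_Icc (le_of_lt ht))
    exact ((Real.continuous_exp.comp continuous_neg).tendsto' 0 1 (by simp)).mono_left
      nhdsWithin_le_nhds
  notGroup := ⟨1, one_pos, fun h ↦ not_surjOn_dilationMap (Real.exp_pos _)
    (Real.exp_lt_one_iff.mpr (by norm_num)) h.surjOn⟩

lemma dilationMap_exp_neg_imagAxisPoint (s t : ℝ) :
    dilationMap (exp (-s)) (imagAxisPoint (exp t / 2)) = imagAxisPoint (exp (t - s) / 2) := by
  rw [dilationMap_imagAxisPoint, sub_eq_neg_add, Real.exp_add, mul_div_assoc]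

lemma tendsto_arsinh_atTop : Tendsto arsinh atTop atTop :=
  Real.sinhOrderIso.symm.tendsto_atTop

lemma tendsto_dD_imagAxisPoint_exp_step :
    Tendsto (fun t ↦ dD (imagAxisPoint (exp t / 2)) (imagAxisPoint (exp (t + 1) / 2)))
      atTop atTop := by
  have hstep (t : ℝ) : dD (imagAxisPoint (exp t / 2)) (imagAxisPoint (exp (t + 1) / 2))
      = arsinh ((exp 1 - 1) / 2 * exp t) := by
    rw [dD_imagAxisPoint, abs_sub_comm, Real.exp_add, abs_of_nonneg]
    · ring_nf
    · nlinarith [Real.exp_pos t, Real.add_one_le_exp 1]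
  simp_rw [hstep]
  exact tendsto_arsinh_atTop.comp (Real.tendsto_exp_atTop.const_mul_atTop
    (by linarith [Real.add_one_le_exp 1]))

lemma dD_imagAxisPoint_exp_le {s : ℝ} (hs : 0 ≤ s) :
    dD (imagAxisPoint (exp 0 / 2)) (imagAxisPoint (exp s / 2)) ≤ s := by
  rw [dD_imagAxisPoint, abs_sub_comm, Real.exp_zero,
    abs_of_nonneg (by linarith [Real.add_one_le_exp s])]
  calc arsinh (exp s / 2 - 1 / 2) ≤ arsinh (Real.sinh s) := by
        rw [Real.arsinh_le_arsinh, Real.sinh_eq]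
        linarith [Real.exp_le_one_iff.mpr (neg_nonpos.mpr hs)]
    _ = s := Real.arsinh_sinh s

lemma tendsto_dD_imagAxisPoint_exp_div_sq :
    Tendsto (fun s ↦ dD (imagAxisPoint (exp 0 / 2)) (imagAxisPoint (exp s / 2)) / s ^ 2)
      atTop (nhds 0) := by
  refine squeeze_zero' (g := fun s ↦ s⁻¹) ?_ ?_ tendsto_inv_atTop_zero
  · refine .of_forall fun s ↦ div_nonneg ?_ (sq_nonneg s)
    rw [dD_imagAxisPoint]
    exact Real.arsinh_nonneg_iff.mpr (abs_nonneg _)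
  · filter_upwards [eventually_gt_atTop 0] with s hs
    calc _ ≤ s / s ^ 2 := by gcongr; exact dD_imagAxisPoint_exp_le hs.le
      _ = s⁻¹ := by field_simp

end HalfPlaneDilation

open HalfPlaneDilation in
/-- Proposition 6.1, first part: there exist a semigroup and a non-regular backward
orbit `γ` with `lim_{s → +∞} d_𝔻(γ(0), γ(s))/s² = 0`. -/
theorem stmt11 : ∃ (φ : ℝ → ℂ → ℂ) (γ : ℝ → ℂ),
    IsSemigroupD φ ∧
    ContinuousOn γ (Set.Ici (0 : ℝ)) ∧
    (∀ t : ℝ, 0 ≤ t → γ t ∈ unitDisc) ∧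
    (∀ s t : ℝ, 0 ≤ s → s ≤ t → φ s (γ t) = γ (t - s)) ∧
    (∀ C : ℝ, ∃ᶠ t in Filter.atTop, C < dD (γ t) (γ (t + 1))) ∧
    Filter.Tendsto (fun s => dD (γ 0) (γ s) / s ^ 2) Filter.atTop (nhds 0) :=
  ⟨fun t ↦ dilationMap (Real.exp (-t)), fun t ↦ imagAxisPoint (Real.exp t / 2),
    isSemigroupD_dilationMap_exp_neg,
    (continuous_imagAxisPoint.comp (by fun_prop)).continuousOn,
    fun t _ ↦ norm_imagAxisPoint_lt_one _,
    fun s t _ _ ↦ dilationMap_exp_neg_imagAxisPoint s t,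
    fun C ↦ (tendsto_dD_imagAxisPoint_exp_step.eventually_gt_atTop C).frequently,
    tendsto_dD_imagAxisPoint_exp_div_sq⟩
end

section
/- Let σ, z ∈ ℂ with |σ| = 1 and |z| < 1, let λ ∈ ℝ, and let g ∈ ℂ. If Re(σ·g/(σ − z)²) ≥ (λ/2)·(1 − |z|²)/|σ − z|², then Re(g·conj(z))/(1 − |z|²) ≤ Re(g/(σ − z)) − λ/2. (This is the key pointwise estimate, applied with g = G(φ_t(z)) for the infinitesimal generator G, in the proof of Theorem 4.1; it rests on the identity conj(σ)·conj(z)·(σ − z)²/(1 − |z|²) = 1 − conj(σ)·z − |σ − z|²/(1 − |z|²).) -/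
open Filter Set

/-!
For `|σ| = 1` one has `|σ - z|² σ = (σ - z)(1 - σ conj z)`, which gives the identity
`conj z / (1 - |z|²) = 1/(σ - z) - (|σ - z|²/(1 - |z|²)) σ/(σ - z)²`.
Multiplying by `g` and taking real parts, the hypothesis bounds the subtracted term below by `λ/2`,
since the factor `|σ - z|²/(1 - |z|²)` is positive.
-/

open ComplexConjugate

namespace Complex

lemma conj_div_one_sub_sq_norm_eq {σ z : ℂ} (hσ : ‖σ‖ = 1) (hz : ‖z‖ ≠ 1) :
    conj z / ((1 - ‖z‖ ^ 2 : ℝ) : ℂ) =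
      1 / (σ - z) - ((‖σ - z‖ ^ 2 / (1 - ‖z‖ ^ 2) : ℝ) : ℂ) * (σ / (σ - z) ^ 2) := by
  have hσz : σ - z ≠ 0 := sub_ne_zero.mpr fun h => hz (h ▸ hσ)
  have hσ0 : σ ≠ 0 := norm_ne_zero_iff.mp (by rw [hσ]; exact one_ne_zero)
  have hconj : conj σ = σ⁻¹ := by
    rw [inv_def, normSq_eq_norm_sq, hσ]
    simp
  have hdisc : (1 : ℂ) - conj z * z ≠ 0 := by
    rw [conj_mul', sub_ne_zero, ne_comm]
    exact_mod_cast fun h => hz (by nlinarith [norm_nonneg z])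
  push_cast
  rw [← mul_conj', ← mul_conj', map_sub, hconj]
  field_simp
  ring

lemma re_mul_conj_div_one_sub_sq_norm_eq {σ z : ℂ} (g : ℂ) (hσ : ‖σ‖ = 1) (hz : ‖z‖ ≠ 1) :
    (g * conj z).re / (1 - ‖z‖ ^ 2) =
      (g / (σ - z)).re - ‖σ - z‖ ^ 2 / (1 - ‖z‖ ^ 2) * (σ * g / (σ - z) ^ 2).re := by
  calc (g * conj z).re / (1 - ‖z‖ ^ 2)
      = (g * (conj z / ((1 - ‖z‖ ^ 2 : ℝ) : ℂ))).re := by rw [mul_div_assoc', div_ofReal_re]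
    _ = (g * (1 / (σ - z) - ((‖σ - z‖ ^ 2 / (1 - ‖z‖ ^ 2) : ℝ) : ℂ) * (σ / (σ - z) ^ 2))).re := by
        rw [conj_div_one_sub_sq_norm_eq hσ hz]
    _ = _ := by
        rw [← re_ofReal_mul, ← sub_re]
        ring_nf

end Complex

/-- The key pointwise estimate in the proof of Theorem 4.1: if
`Re(σ g / (σ - z)²) ≥ (λ/2)(1 - |z|²)/|σ - z|²`, then
`Re(g conj z)/(1 - |z|²) ≤ Re(g/(σ - z)) - λ/2`. -/
theorem stmt13 (σ z g : ℂ) (hσ : ‖σ‖ = 1) (hz : ‖z‖ < 1)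
    (lam : ℝ)
    (hineq : (lam / 2) * ((1 - ‖z‖ ^ 2) / ‖σ - z‖ ^ 2) ≤
      (σ * g / (σ - z) ^ 2).re) :
    (g * (starRingEnd ℂ) z).re / (1 - ‖z‖ ^ 2) ≤
      (g / (σ - z)).re - lam / 2 := by
  have hdisc : 0 < 1 - ‖z‖ ^ 2 := by nlinarith [norm_nonneg z]
  have hσz : 0 < ‖σ - z‖ ^ 2 := by
    have : σ - z ≠ 0 := sub_ne_zero.mpr fun h => hz.ne (h ▸ hσ)
    positivity
  have hlam : lam / 2 ≤ ‖σ - z‖ ^ 2 / (1 - ‖z‖ ^ 2) * (σ * g / (σ - z) ^ 2).re := by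
    rw [mul_div_assoc', div_le_iff₀ hσz] at hineq
    rwa [div_mul_eq_mul_div, le_div_iff₀ hdisc, mul_comm (‖σ - z‖ ^ 2)]
  rw [Complex.re_mul_conj_div_one_sub_sq_norm_eq g hσ hz.ne]
  linarith
end
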